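/- arXiv:1808.05402 — 2 statements merged into one kernel-verified Lean document; each statement's English description precedes it below -/
import Mathlib

section
/- Let A be a self-adjoint non-negative operator on a Hilbert space H_ε associated with a non-negative closed form a_ε, let λ ∈ σ(A) with 0 ≤ λ ≤ (1−d)/d for some d ∈ (0,1), and let J̌ : H_ε → H be a bounded linear operator such that ‖u‖² ≤ ‖J̌u‖² + ν·a_ε[u,u] for all u ∈ dom(a_ε), with 0 ≤ ν < d/(1−d). If ψ ∈ dom(A) satisfies ‖ψ‖ = 1 and ‖(A − λ·I)ψ‖ ≤ η, then ‖J̌ψ‖² ≥ 1 − ((1−d)/d + η)·ν; in particular J̌ψ ≠ 0 for η sufficiently small. -/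
open MeasureTheory

local notation "⟪" x ", " y "⟫" => @inner ℂ _ _ x y

/-- Let `A` be the self-adjoint non-negative operator associated with a
closed non-negative form `a_ε` (so that `a_ε[u,u] = ⟪Au,u⟫` for `u ∈ dom A`), let
`0 ≤ λ ≤ (1−d)/d` with `d ∈ (0,1)`, and let `J̌ : H_ε → H` be bounded linear with
`‖u‖² ≤ ‖J̌u‖² + ν·a_ε[u,u]` for `u ∈ dom A ⊆ dom a_ε`, `0 ≤ ν < d/(1−d)`.
If `ψ ∈ dom A`, `‖ψ‖ = 1` and `‖(A − λ)ψ‖ ≤ η`, then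
`‖J̌ψ‖² ≥ 1 − ((1−d)/d + η)·ν`. -/
theorem stmt2
    {H Hε : Type*}
    [NormedAddCommGroup H] [InnerProductSpace ℂ H] [CompleteSpace H]
    [NormedAddCommGroup Hε] [InnerProductSpace ℂ Hε] [CompleteSpace Hε]
    (dom : Submodule ℂ Hε) (hdense : Dense (dom : Set Hε))
    (A : dom →ₗ[ℂ] Hε)
    (hsym : ∀ x y : dom, ⟪A x, (y : Hε)⟫ = ⟪(x : Hε), A y⟫)
    (hnonneg : ∀ x : dom, 0 ≤ (⟪A x, (x : Hε)⟫).re)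
    (J : Hε →L[ℂ] H)
    (d ν : ℝ) (hd0 : 0 < d) (hd1 : d < 1) (hν0 : 0 ≤ ν) (hν : ν < d / (1 - d))
    -- the form inequality `‖u‖² ≤ ‖J̌u‖² + ν·a_ε[u,u]`, using `a_ε[u,u] = ⟪Au,u⟫`
    (hJ : ∀ u : dom, ‖(u : Hε)‖ ^ 2 ≤ ‖J (u : Hε)‖ ^ 2 + ν * (⟪A u, (u : Hε)⟫).re)
    (lam : ℝ) (hlam0 : 0 ≤ lam) (hlam1 : lam ≤ (1 - d) / d)
    (η : ℝ) (hη : 0 ≤ η)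
    (ψ : dom) (hψ : ‖(ψ : Hε)‖ = 1)
    (happrox : ‖A ψ - (lam : ℂ) • (ψ : Hε)‖ ≤ η) :
    1 - ((1 - d) / d + η) * ν ≤ ‖J (ψ : Hε)‖ ^ 2 := by

  have key : (⟪A ψ, (ψ : Hε)⟫).re ≤ (1 - d) / d + η := by
    have hsplit : ⟪A ψ, (ψ : Hε)⟫ =
        ⟪A ψ - (lam : ℂ) • (ψ : Hε), (ψ : Hε)⟫ + ⟪(lam : ℂ) • (ψ : Hε), (ψ : Hε)⟫ := by
      rw [← inner_add_left, sub_add_cancel]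
    have h2 : (⟪(lam : ℂ) • (ψ : Hε), (ψ : Hε)⟫).re = lam := by
      rw [inner_smul_left]
      simp [← Complex.ofReal_pow, Complex.conj_ofReal, inner_self_eq_norm_sq_to_K, hψ]
    have h1 : (⟪A ψ - (lam : ℂ) • (ψ : Hε), (ψ : Hε)⟫).re ≤ η := by
      calc (⟪A ψ - (lam : ℂ) • (ψ : Hε), (ψ : Hε)⟫).re
          ≤ ‖⟪A ψ - (lam : ℂ) • (ψ : Hε), (ψ : Hε)⟫‖ := Complex.re_le_norm _
        _ ≤ ‖A ψ - (lam : ℂ) • (ψ : Hε)‖ * ‖(ψ : Hε)‖ := norm_inner_le_norm _ _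
        _ ≤ η := by rw [hψ, mul_one]; exact happrox
    rw [hsplit, Complex.add_re, h2]
    linarith
  have hJψ := hJ ψ
  rw [hψ] at hJψ
  have hmul : ν * (⟪A ψ, (ψ : Hε)⟫).re ≤ ((1 - d) / d + η) * ν := by
    rw [mul_comm]
    exact mul_le_mul_of_nonneg_right key hν0
  nlinarith [hJψ, hmul]
end

section
/- Suppose A_ε and A are self-adjoint non-negative operators on Hilbert spaces H_ε and H, J_ε : H → H_ε and J̌_ε : H_ε → H are bounded linear operators satisfying ‖J̌_ε(A_ε+I)^{-1} − (A+I)^{-1}J̌_ε‖ ≤ δ̌_ε and ‖u‖² ≤ ‖J̌_ε u‖² + ν̌_ε·⟨A_ε u, u⟩ for all u ∈ dom(A_ε). Fix d ∈ (0,1) with ν̌_ε < d/(1−d). Then every z ∈ σ((A_ε+I)^{-1}) ∩ [d,1] satisfies dist(z, σ((A+I)^{-1})) ≤ δ̌_ε / √(1 − ν̌_ε(d^{-1}−1)). -/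
/-!
By the Weyl criterion, `z ∈ σ(R_ε)` has unit approximate eigenvectors `ψ`, `‖R_ε ψ - z ψ‖ ≤ ε`.
Since `A_ε u = ψ - u` for `u = R_ε ψ`, the form inequality reads
`(1 + ν)‖u‖² ≤ ‖J u‖² + ν Re⟪ψ, u⟫`, which, as `u ≈ z ψ`, forces
`‖J ψ‖² ≳ 1 - ν (z⁻¹ - 1) ≥ 1 - ν (d⁻¹ - 1)`. The intertwining estimate makes `J ψ` an
approximate eigenvector of `R` for `z` with defect `≲ δ`, and for self-adjoint `R` one has
`dist(z, σ(R)) ‖φ‖ ≤ ‖(z - R) φ‖`. Letting `ε → 0` gives the bound.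
-/

local notation "⟪" x ", " y "⟫" => @inner ℂ _ _ x y

open Metric

theorem IsSelfAdjoint.algebraMap_ofReal_sub {A : Type*} [Ring A] [StarRing A] [Algebra ℂ A]
    [StarModule ℂ A] {a : A} (ha : IsSelfAdjoint a) (z : ℝ) :
    IsSelfAdjoint (algebraMap ℂ A z - a) :=
  (IsSelfAdjoint.algebraMap A (Complex.conj_ofReal z)).sub ha

theorem IsSelfAdjoint.norm_inv_le {A : Type*} [CStarAlgebra A] (a : Aˣ)
    (ha : IsSelfAdjoint (a : A)) {t : ℝ} (ht : 0 < t)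
    (h : ∀ w ∈ spectrum ℂ (a : A), t ≤ ‖w‖) : ‖(↑a⁻¹ : A)‖ ≤ t⁻¹ := by
  have ha' : IsSelfAdjoint (↑a⁻¹ : A) := by simpa using ha.ringInverse
  rw [← ha'.toReal_spectralRadius_complex_eq_norm]
  refine ENNReal.toReal_le_of_le_ofReal (by positivity) (iSup₂_le fun k hk => ?_)
  rw [← spectrum.map_inv] at hk
  have hk' : t ≤ ‖k‖⁻¹ := norm_inv k ▸ h _ hk
  rw [← enorm_eq_nnnorm, ← ofReal_norm]
  exact ENNReal.ofReal_le_ofReal ((le_inv_comm₀ ht (inv_pos.mp (ht.trans_le hk'))).mp hk')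

section
variable {E : Type*} [NormedAddCommGroup E] [InnerProductSpace ℂ E] [CompleteSpace E]
  {T : E →L[ℂ] E}

theorem IsSelfAdjoint.isUnit_of_forall_mul_norm_le (hT : IsSelfAdjoint T) {c : ℝ} (hc : 0 < c)
    (h : ∀ x, c * ‖x‖ ≤ ‖T x‖) : IsUnit T := by
  rw [← isUnit_pow_iff two_ne_zero]
  refine ContinuousLinearMap.isUnit_of_forall_le_norm_inner_map _ (c := (c ^ 2).toNNReal)
    (Real.toNNReal_pos.2 (by positivity)) fun x => ?_
  rw [Real.coe_toNNReal _ (sq_nonneg c), sq T, ContinuousLinearMap.mul_def,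
    ContinuousLinearMap.comp_apply, ← ContinuousLinearMap.adjoint_inner_right, hT.adjoint_eq,
    inner_self_eq_norm_sq_to_K]
  norm_cast
  rw [abs_of_nonneg (sq_nonneg _), mul_comm, ← mul_pow]
  exact pow_le_pow_left₀ (by positivity) (h x) 2

theorem IsSelfAdjoint.exists_norm_sub_smul_le_of_mem_spectrum (hT : IsSelfAdjoint T) {z : ℝ}
    (hz : (z : ℂ) ∈ spectrum ℂ T) {ε : ℝ} (hε : 0 < ε) :
    ∃ ψ, ‖ψ‖ = 1 ∧ ‖T ψ - (z : ℂ) • ψ‖ ≤ ε := by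
  by_contra! h
  refine hz ((hT.algebraMap_ofReal_sub z).isUnit_of_forall_mul_norm_le hε fun x => ?_)
  obtain rfl | hx := eq_or_ne x 0
  · simp
  have := h _ (norm_smul_inv_norm (𝕜 := ℂ) hx)
  rw [map_smul, smul_comm, ← smul_sub, norm_smul, norm_inv, RCLike.norm_ofReal, abs_norm,
    inv_mul_eq_div, lt_div_iff₀ (norm_pos_iff.2 hx)] at this
  rw [sub_apply, ContinuousLinearMap.algebraMap_apply, norm_sub_rev]
  exact this.le

theorem IsSelfAdjoint.infDist_mul_norm_le (hT : IsSelfAdjoint T) (z : ℝ) (x : E) :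
    infDist (z : ℂ) (spectrum ℂ T) * ‖x‖ ≤ ‖(z : ℂ) • x - T x‖ := by
  obtain ht | ht := (infDist_nonneg : 0 ≤ infDist (z : ℂ) (spectrum ℂ T)).eq_or_lt
  · rw [← ht, zero_mul]; exact norm_nonneg _
  set t := infDist (z : ℂ) (spectrum ℂ T)
  have hz : (z : ℂ) ∉ spectrum ℂ T := fun hz => ht.ne' (infDist_zero_of_mem hz)
  obtain ⟨S, hS⟩ := spectrum.notMem_iff.mp hz
  have hSsa : IsSelfAdjoint (S : E →L[ℂ] E) := by
    rw [hS]; exact hT.algebraMap_ofReal_sub z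
  have hspec : ∀ w ∈ spectrum ℂ (S : E →L[ℂ] E), t ≤ ‖w‖ := by
    intro w hw
    rw [hS, ← spectrum.singleton_sub_eq] at hw
    obtain ⟨_, rfl, μ, hμ, rfl⟩ := hw
    rw [← dist_eq_norm]
    exact infDist_le_dist_of_mem hμ
  have hSx : (S : E →L[ℂ] E) x = (z : ℂ) • x - T x := by
    simp [hS, Algebra.algebraMap_eq_smul_one]
  calc t * ‖x‖ = t * ‖(↑S⁻¹ : E →L[ℂ] E) ((S : E →L[ℂ] E) x)‖ := by
        rw [← ContinuousLinearMap.comp_apply, ← ContinuousLinearMap.mul_def, S.inv_mul,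
          one_apply_eq_self]
    _ ≤ t * (t⁻¹ * ‖(S : E →L[ℂ] E) x‖) := by
        gcongr
        exact (ContinuousLinearMap.le_opNorm _ _).trans
          (by gcongr; exact hSsa.norm_inv_le S ht hspec)
    _ = ‖(z : ℂ) • x - T x‖ := by rw [← mul_assoc, mul_inv_cancel₀ ht.ne', one_mul, hSx]

end

section
variable {H Hε : Type*} [NormedAddCommGroup H] [InnerProductSpace ℂ H]
  [NormedAddCommGroup Hε] [InnerProductSpace ℂ Hε]
  {Rε : Hε →L[ℂ] Hε} {R : H →L[ℂ] H} {J : Hε →L[ℂ] H} {δ ν z ε : ℝ} {ψ : Hε}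

theorem one_add_mul_sq_norm_apply_le {dom : Submodule ℂ Hε} {A : dom →ₗ[ℂ] Hε}
    (hres : ∀ f : Hε, ∃ hf : Rε f ∈ dom, A ⟨Rε f, hf⟩ + Rε f = f)
    (hJ : ∀ u : dom, ‖(u : Hε)‖ ^ 2 ≤ ‖J (u : Hε)‖ ^ 2 + ν * (⟪A u, (u : Hε)⟫).re) (ψ : Hε) :
    (1 + ν) * ‖Rε ψ‖ ^ 2 ≤ ‖J (Rε ψ)‖ ^ 2 + ν * (⟪ψ, Rε ψ⟫).re := by
  obtain ⟨hf, hA⟩ := hres ψ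
  have hform : (⟪A ⟨Rε ψ, hf⟩, Rε ψ⟫).re = (⟪ψ, Rε ψ⟫).re - ‖Rε ψ‖ ^ 2 := by
    rw [eq_sub_of_add_eq hA, inner_sub_left, Complex.sub_re, inner_self_eq_norm_sq_to_K]
    norm_cast
  have := hJ ⟨Rε ψ, hf⟩
  simp only [hform] at this
  linarith

theorem infDist_spectrum_mul_norm_apply_le [CompleteSpace H] (hR : IsSelfAdjoint R)
    (hcomm : ‖J ∘L Rε - R ∘L J‖ ≤ δ) (hψ : ‖ψ‖ = 1) (hres : ‖Rε ψ - (z : ℂ) • ψ‖ ≤ ε) :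
    infDist (z : ℂ) (spectrum ℂ R) * ‖J ψ‖ ≤ δ + ‖J‖ * ε := by
  have hsplit : (z : ℂ) • J ψ - R (J ψ) = (J ∘L Rε - R ∘L J) ψ - J (Rε ψ - (z : ℂ) • ψ) := by
    simp only [sub_apply, ContinuousLinearMap.comp_apply, map_sub, map_smul]
    abel
  calc infDist (z : ℂ) (spectrum ℂ R) * ‖J ψ‖ ≤ ‖(z : ℂ) • J ψ - R (J ψ)‖ :=
        hR.infDist_mul_norm_le z (J ψ)
    _ ≤ ‖J ∘L Rε - R ∘L J‖ * ‖ψ‖ + ‖J‖ * ‖Rε ψ - (z : ℂ) • ψ‖ := by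
        rw [hsplit]
        exact (norm_sub_le _ _).trans (add_le_add ((J ∘L Rε - R ∘L J).le_opNorm _) (J.le_opNorm _))
    _ ≤ δ + ‖J‖ * ε := by rw [hψ, mul_one]; gcongr

theorem one_add_mul_sq_sub_le_sq (hν : 0 ≤ ν)
    (hform : ∀ ψ, (1 + ν) * ‖Rε ψ‖ ^ 2 ≤ ‖J (Rε ψ)‖ ^ 2 + ν * (⟪ψ, Rε ψ⟫).re)
    (hψ : ‖ψ‖ = 1) (hres : ‖Rε ψ - (z : ℂ) • ψ‖ ≤ ε) (hεz : ε ≤ z) :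
    (1 + ν) * (z - ε) ^ 2 - ν * (z + ε) ≤ (z * ‖J ψ‖ + ‖J‖ * ε) ^ 2 := by
  set w := Rε ψ - (z : ℂ) • ψ
  have hz : 0 ≤ z := (norm_nonneg w).trans (hres.trans hεz)
  have hRψ : Rε ψ = (z : ℂ) • ψ + w := by simp [w]
  have hzψ : ‖(z : ℂ) • ψ‖ = z := by simp [norm_smul, hψ, abs_of_nonneg hz]
  have hnorm : z - ε ≤ ‖Rε ψ‖ := by
    have := norm_sub_norm_le ((z : ℂ) • ψ) (-w)
    rw [sub_neg_eq_add, ← hRψ, norm_neg, hzψ] at this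
    linarith
  have hJnorm : ‖J (Rε ψ)‖ ≤ z * ‖J ψ‖ + ‖J‖ * ε := by
    rw [hRψ, map_add, map_smul]
    refine (norm_add_le _ _).trans (add_le_add ?_ ((J.le_opNorm w).trans (by gcongr)))
    rw [norm_smul, Complex.norm_real, Real.norm_of_nonneg hz]
  have hinner : (⟪ψ, Rε ψ⟫).re ≤ z + ε := by
    have hre : (⟪ψ, Rε ψ⟫).re = z + (⟪ψ, w⟫).re := by
      rw [hRψ, inner_add_right, inner_smul_right, inner_self_eq_norm_sq_to_K, hψ]
      simp
    calc (⟪ψ, Rε ψ⟫).re ≤ z + ‖ψ‖ * ‖w‖ :=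
          hre ▸ add_le_add_right ((Complex.re_le_norm _).trans (norm_inner_le_norm ψ w)) z
      _ ≤ z + ε := by rwa [hψ, one_mul, add_le_add_iff_left]
  calc (1 + ν) * (z - ε) ^ 2 - ν * (z + ε) ≤ (1 + ν) * ‖Rε ψ‖ ^ 2 - ν * (⟪ψ, Rε ψ⟫).re := by
        gcongr
    _ ≤ ‖J (Rε ψ)‖ ^ 2 := by linarith [hform ψ]
    _ ≤ (z * ‖J ψ‖ + ‖J‖ * ε) ^ 2 := pow_le_pow_left₀ (norm_nonneg _) hJnorm 2

open Filter Topology in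
theorem sq_infDist_spectrum_mul_le [CompleteSpace H] [CompleteSpace Hε] (hRε : IsSelfAdjoint Rε)
    (hR : IsSelfAdjoint R) (hcomm : ‖J ∘L Rε - R ∘L J‖ ≤ δ) (hν : 0 ≤ ν)
    (hform : ∀ ψ, (1 + ν) * ‖Rε ψ‖ ^ 2 ≤ ‖J (Rε ψ)‖ ^ 2 + ν * (⟪ψ, Rε ψ⟫).re)
    (hz : (z : ℂ) ∈ spectrum ℂ Rε) (hz0 : 0 < z) :
    infDist (z : ℂ) (spectrum ℂ R) ^ 2 * ((1 + ν) * z ^ 2 - ν * z) ≤ (z * δ) ^ 2 := by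
  set t := infDist (z : ℂ) (spectrum ℂ R)
  have hev : ∀ᶠ ε in 𝓝[>] 0, t ^ 2 * ((1 + ν) * (z - ε) ^ 2 - ν * (z + ε))
      ≤ (z * (δ + ‖J‖ * ε) + t * ‖J‖ * ε) ^ 2 := by
    filter_upwards [Ioo_mem_nhdsGT hz0] with ε ⟨hε0, hεz⟩
    obtain ⟨ψ, hψ, hres⟩ := hRε.exists_norm_sub_smul_le_of_mem_spectrum hz hε0
    calc _ ≤ t ^ 2 * (z * ‖J ψ‖ + ‖J‖ * ε) ^ 2 := by
          gcongr; exact one_add_mul_sq_sub_le_sq hν hform hψ hres hεz.le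
      _ = (z * (t * ‖J ψ‖) + t * ‖J‖ * ε) ^ 2 := by ring
      _ ≤ _ := by
          have hJψ := infDist_spectrum_mul_norm_apply_le hR hcomm hψ hres
          have ht : 0 ≤ t := infDist_nonneg
          gcongr
  refine le_of_tendsto_of_tendsto ?_ ?_ hev <;>
    exact (Continuous.tendsto' (by fun_prop) 0 _ (by ring)).mono_left nhdsWithin_le_nhds

end

theorem stmt13_general
    {H Hε : Type*}
    [NormedAddCommGroup H] [InnerProductSpace ℂ H] [CompleteSpace H]
    [NormedAddCommGroup Hε] [InnerProductSpace ℂ Hε] [CompleteSpace Hε]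
    -- the operator `A_ε` with resolvent `R_ε`
    (domε : Submodule ℂ Hε)
    (Aε : domε →ₗ[ℂ] Hε)
    (Rε : Hε →L[ℂ] Hε) (hRε : IsSelfAdjoint Rε)
    (hresε₁ : ∀ f : Hε, ∃ hf : Rε f ∈ domε, Aε ⟨Rε f, hf⟩ + Rε f = f)
    -- the operator `A` with resolvent `R`
    (R : H →L[ℂ] H) (hR : IsSelfAdjoint R)
    -- the identification operator and the assumptions of the theorem
    (Jc : Hε →L[ℂ] H) (δc νc d : ℝ)
    (hδc : 0 ≤ δc) (hd0 : 0 < d) (hd1 : d < 1)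
    (hνc0 : 0 ≤ νc) (hνc : νc < d / (1 - d))
    (hcomm : ‖Jc.comp Rε - R.comp Jc‖ ≤ δc)
    (hJc : ∀ u : domε, ‖(u : Hε)‖ ^ 2 ≤ ‖Jc (u : Hε)‖ ^ 2 + νc * (⟪Aε u, (u : Hε)⟫).re) :
    ∀ z : ℝ, (z : ℂ) ∈ spectrum ℂ Rε → d ≤ z → z ≤ 1 →
      Metric.infDist (z : ℂ) (spectrum ℂ R) ≤ δc / Real.sqrt (1 - νc * (d⁻¹ - 1)) := by
  intro z hz hdz _
  have hz0 : 0 < z := hd0.trans_le hdz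
  set β := 1 - νc * (d⁻¹ - 1)
  set t := infDist (z : ℂ) (spectrum ℂ R)
  have hβ : 0 < β := by
    rw [lt_div_iff₀ (sub_pos.2 hd1)] at hνc
    have : νc * (d⁻¹ - 1) = νc * (1 - d) / d := by field_simp
    rw [sub_pos, this, div_lt_one hd0]
    exact hνc
  have hzβ : z ^ 2 * β ≤ (1 + νc) * z ^ 2 - νc * z := by
    have : 1 ≤ z * d⁻¹ := by rwa [← div_eq_mul_inv, one_le_div hd0]
    nlinarith [mul_nonneg hνc0 hz0.le]
  have hlim := sq_infDist_spectrum_mul_le hRε hR hcomm hνc0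
    (one_add_mul_sq_norm_apply_le hresε₁ hJc) hz hz0
  have htβ : t ^ 2 * β ≤ δc ^ 2 := by
    refine le_of_mul_le_mul_left ?_ (pow_pos hz0 2)
    calc z ^ 2 * (t ^ 2 * β) = t ^ 2 * (z ^ 2 * β) := by ring
      _ ≤ t ^ 2 * ((1 + νc) * z ^ 2 - νc * z) := by gcongr
      _ ≤ z ^ 2 * δc ^ 2 := by rw [← mul_pow]; exact hlim
  rw [le_div_iff₀ (Real.sqrt_pos.2 hβ)]
  refine (pow_le_pow_iff_left₀ (mul_nonneg infDist_nonneg (Real.sqrt_nonneg _)) hδc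
    two_ne_zero).1 ?_
  rwa [mul_pow, Real.sq_sqrt hβ.le]

/-- one-sided Hausdorff estimate for spectra of resolvents. If
`A_ε`, `A` are non-negative self-adjoint operators with resolvents
`R_ε = (A_ε+I)⁻¹`, `R = (A+I)⁻¹`, `J̌_ε : H_ε → H` is bounded with
`‖J̌_ε R_ε − R J̌_ε‖ ≤ δ̌_ε` and `‖u‖² ≤ ‖J̌_ε u‖² + ν̌_ε ⟪A_ε u, u⟫` on `dom A_ε`,
and `d ∈ (0,1)` with `ν̌_ε < d/(1−d)`, then every `z ∈ σ(R_ε) ∩ [d,1]` satisfies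
`dist(z, σ(R)) ≤ δ̌_ε / √(1 − ν̌_ε(d⁻¹ − 1))`. -/
theorem stmt13
    {H Hε : Type*}
    [NormedAddCommGroup H] [InnerProductSpace ℂ H] [CompleteSpace H]
    [NormedAddCommGroup Hε] [InnerProductSpace ℂ Hε] [CompleteSpace Hε]
    -- the operator `A_ε` with resolvent `R_ε`
    (domε : Submodule ℂ Hε) (hdenseε : Dense (domε : Set Hε))
    (Aε : domε →ₗ[ℂ] Hε)
    (hsymε : ∀ x y : domε, ⟪Aε x, (y : Hε)⟫ = ⟪(x : Hε), Aε y⟫)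
    (hnonnegε : ∀ x : domε, 0 ≤ (⟪Aε x, (x : Hε)⟫).re)
    (Rε : Hε →L[ℂ] Hε) (hRε : IsSelfAdjoint Rε)
    (hresε₁ : ∀ f : Hε, ∃ hf : Rε f ∈ domε, Aε ⟨Rε f, hf⟩ + Rε f = f)
    (hresε₂ : ∀ x : domε, Rε (Aε x + (x : Hε)) = (x : Hε))
    -- the operator `A` with resolvent `R`
    (dom : Submodule ℂ H) (hdense : Dense (dom : Set H))
    (A : dom →ₗ[ℂ] H)
    (hsym : ∀ x y : dom, ⟪A x, (y : H)⟫ = ⟪(x : H), A y⟫)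
    (hnonneg : ∀ x : dom, 0 ≤ (⟪A x, (x : H)⟫).re)
    (R : H →L[ℂ] H) (hR : IsSelfAdjoint R)
    (hres₁ : ∀ f : H, ∃ hf : R f ∈ dom, A ⟨R f, hf⟩ + R f = f)
    (hres₂ : ∀ x : dom, R (A x + (x : H)) = (x : H))
    -- the identification operator and the assumptions of the theorem
    (Jc : Hε →L[ℂ] H) (δc νc d : ℝ)
    (hδc : 0 ≤ δc) (hd0 : 0 < d) (hd1 : d < 1)
    (hνc0 : 0 ≤ νc) (hνc : νc < d / (1 - d))
    (hcomm : ‖Jc.comp Rε - R.comp Jc‖ ≤ δc)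
    (hJc : ∀ u : domε, ‖(u : Hε)‖ ^ 2 ≤ ‖Jc (u : Hε)‖ ^ 2 + νc * (⟪Aε u, (u : Hε)⟫).re) :
    ∀ z : ℝ, (z : ℂ) ∈ spectrum ℂ Rε → d ≤ z → z ≤ 1 →
      Metric.infDist (z : ℂ) (spectrum ℂ R) ≤ δc / Real.sqrt (1 - νc * (d⁻¹ - 1)) :=
  stmt13_general domε Aε Rε hRε hresε₁ R hR Jc δc νc d hδc hd0 hd1 hνc0 hνc hcomm hJc
end
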